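/- Let R = R(a_1,…,a_l) and R'' = R(a_1,…,a_l, a_{l+1},…,a_m) be nested top-l and top-m partial rankings in S_n (so R'' ⊆ R). Then for every σ ∈ R, A_{R''}(Π_{R''}(σ)) = Π_{R''}(A_R(σ)); i.e. the antithetic operator on R'' applied to the projection of σ onto R'' equals the projection onto R'' of the antithetic of σ in R. -/

import Mathlib

/-- The Kendall (tau) distance between two permutations of `Fin n`:
the number of pairs `(x, y)` with `x < y` on which `σ⁻¹` and `τ⁻¹`
disagree in relative order. -/
def kendallDist {n : ℕ} (σ τ : Equiv.Perm (Fin n)) : ℕ :=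
  (Finset.univ.filter (fun p : Fin n × Fin n =>
    p.1 < p.2 ∧ ¬((σ⁻¹ p.1 < σ⁻¹ p.2) ↔ (τ⁻¹ p.1 < τ⁻¹ p.2)))).card

/-- The top-`k` partial ranking determined by the items `a 0, …, a (k-1)`:
the set of full rankings (permutations) `σ` with `σ i = a i` for the first
`k` positions. -/
def topkFinset {n k : ℕ} (hk : k ≤ n) (a : Fin k → Fin n) :
    Finset (Equiv.Perm (Fin n)) :=
  Finset.univ.filter fun σ => ∀ i : Fin k, σ (Fin.castLE hk i) = a i

/-- The permutation of `Fin n` fixing the first `k` positions and reversing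
the order of the remaining `n - k` positions. -/
def revAfter (n k : ℕ) : Equiv.Perm (Fin n) :=
  Function.Involutive.toPerm
    (fun p => if _h : (p : ℕ) < k then p
      else ⟨n + k - 1 - (p : ℕ), by have := p.isLt; omega⟩)
    (by
      intro p
      have hp := p.isLt
      by_cases h : (p : ℕ) < k
      · simp [h]
      · have h2 : ¬ (n + k - 1 - (p : ℕ) < k) := by omega
        simp only [dif_neg h, dif_neg h2]
        ext
        simp
        omega)

/-- The antithetic permutation of `σ` relative to a top-`k` partial ranking:
the first `k` positions are unchanged and the remaining positions are
reversed, i.e. `A σ (k+j) = σ (n+1-j)` (in 1-indexed notation). -/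
def antithetic (n k : ℕ) (σ : Equiv.Perm (Fin n)) : Equiv.Perm (Fin n) :=
  σ * revAfter n k

/-! Within a top-`m` partial ranking `R''`, the Kendall distance to `τ` varies only through the
pairs of items outside `a`, and some ranking of `R''` orders those items exactly as `τ` does. So
`Π_{R''}(τ)` is the unique ranking of `R''` ordering the unranked items as `τ` does. Both
antithetic operators reverse the order of these items (for `A_R` because, for `σ ∈ R`, they occupy
positions beyond `l`), so `A_{R''}(Π_{R''}(σ))` and `Π_{R''}(A_R(σ))` both rank them in reverse
`σ`-order and therefore coincide. -/

open Equiv Finset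

def SameOrderOn {α : Type*} [LinearOrder α] (s : Set α) (ρ τ : Perm α) : Prop :=
  ∀ x ∈ s, ∀ y ∈ s, ρ⁻¹ x < ρ⁻¹ y ↔ τ⁻¹ x < τ⁻¹ y

section SameOrder

variable {α : Type*} [LinearOrder α] {s : Set α} {ρ τ : Perm α}

theorem sameOrderOn_of_lt (h : ∀ x ∈ s, ∀ y ∈ s, x < y → (ρ⁻¹ x < ρ⁻¹ y ↔ τ⁻¹ x < τ⁻¹ y)) :
    SameOrderOn s ρ τ := by
  intro x hx y hy
  rcases lt_trichotomy x y with hxy | rfl | hxy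
  · exact h x hx y hy hxy
  · simp
  · have hρ : ρ⁻¹ y ≠ ρ⁻¹ x := ρ⁻¹.injective.ne hxy.ne
    have hτ : τ⁻¹ y ≠ τ⁻¹ x := τ⁻¹.injective.ne hxy.ne
    rw [← not_iff_not, not_lt, not_lt, hρ.le_iff_lt, hτ.le_iff_lt]
    exact h y hy x hx hxy

theorem SameOrderOn.eq [Finite α] (h : SameOrderOn Set.univ ρ τ) : ρ = τ := by
  have hmono : StrictMono (τ⁻¹ * ρ) := fun p q hpq => by
    simpa [Perm.mul_apply] using (h (ρ p) trivial (ρ q) trivial).1 (by simpa using hpq)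
  exact (inv_mul_eq_one.1 (Perm.ext (congrFun hmono.eq_id))).symm

end SameOrder

section TopK

variable {n k : ℕ} {hk : k ≤ n} {a : Fin k → Fin n} {ρ ρ' τ : Perm (Fin n)}

theorem mem_topkFinset : ρ ∈ topkFinset hk a ↔ ∀ i, ρ (Fin.castLE hk i) = a i := by
  simp [topkFinset]

theorem inv_apply_of_mem_topkFinset (hρ : ρ ∈ topkFinset hk a) (i : Fin k) :
    ρ⁻¹ (a i) = Fin.castLE hk i :=
  Perm.inv_eq_iff_eq.2 (mem_topkFinset.1 hρ i).symm

theorem le_inv_apply_iff_notMem_range (hρ : ρ ∈ topkFinset hk a) {x : Fin n} :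
    k ≤ (ρ⁻¹ x : ℕ) ↔ x ∉ Set.range a := by
  constructor
  · rintro h ⟨i, rfl⟩
    rw [inv_apply_of_mem_topkFinset hρ, Fin.val_castLE] at h
    exact absurd i.isLt (not_lt.2 h)
  · intro hx
    by_contra! h
    refine hx ⟨⟨_, h⟩, ?_⟩
    rw [← mem_topkFinset.1 hρ]
    simp

theorem inv_lt_inv_iff_of_mem_range (hρ : ρ ∈ topkFinset hk a) (hρ' : ρ' ∈ topkFinset hk a)
    {x y : Fin n} (hxy : x ∈ Set.range a ∨ y ∈ Set.range a) :
    ρ⁻¹ x < ρ⁻¹ y ↔ ρ'⁻¹ x < ρ'⁻¹ y := by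
  have head : ∀ z ∈ Set.range a, ρ⁻¹ z = ρ'⁻¹ z ∧ (ρ⁻¹ z : ℕ) < k := by
    rintro _ ⟨i, rfl⟩
    simp [inv_apply_of_mem_topkFinset hρ, inv_apply_of_mem_topkFinset hρ']
  have tail : ∀ z ∉ Set.range a, k ≤ (ρ⁻¹ z : ℕ) ∧ k ≤ (ρ'⁻¹ z : ℕ) := fun z hz =>
    ⟨(le_inv_apply_iff_notMem_range hρ).2 hz, (le_inv_apply_iff_notMem_range hρ').2 hz⟩
  rw [Fin.lt_def, Fin.lt_def]
  by_cases hx : x ∈ Set.range a <;> by_cases hy : y ∈ Set.range a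
  · rw [(head x hx).1, (head y hy).1]
  · have := head x hx; have := tail y hy; omega
  · have := tail x hx; have := head y hy; omega
  · tauto

def discordantPairs (σ τ : Perm (Fin n)) : Finset (Fin n × Fin n) :=
  univ.filter fun p => p.1 < p.2 ∧ ¬((σ⁻¹ p.1 < σ⁻¹ p.2) ↔ (τ⁻¹ p.1 < τ⁻¹ p.2))

theorem kendallDist_eq_card_discordantPairs (σ τ : Perm (Fin n)) :
    kendallDist σ τ = #(discordantPairs σ τ) :=
  rfl

theorem discordantPairs_subset (hρ : ρ ∈ topkFinset hk a) (hρ' : ρ' ∈ topkFinset hk a)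
    (h' : SameOrderOn (Set.range a)ᶜ ρ' τ) : discordantPairs ρ' τ ⊆ discordantPairs ρ τ := by
  intro p
  simp only [discordantPairs, mem_filter, mem_univ, true_and]
  rintro ⟨hlt, hdis⟩
  have hhead : p.1 ∈ Set.range a ∨ p.2 ∈ Set.range a := by
    by_contra! hp
    exact hdis (h' _ hp.1 _ hp.2)
  exact ⟨hlt, by rwa [inv_lt_inv_iff_of_mem_range hρ hρ' hhead]⟩

theorem sameOrderOn_of_kendallDist_le (hρ : ρ ∈ topkFinset hk a) (hρ' : ρ' ∈ topkFinset hk a)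
    (h' : SameOrderOn (Set.range a)ᶜ ρ' τ) (hle : kendallDist ρ τ ≤ kendallDist ρ' τ) :
    SameOrderOn (Set.range a)ᶜ ρ τ := by
  rw [kendallDist_eq_card_discordantPairs, kendallDist_eq_card_discordantPairs] at hle
  have heq := eq_of_subset_of_card_le (discordantPairs_subset hρ hρ' h') hle
  refine sameOrderOn_of_lt fun x hx y hy hxy => ?_
  by_contra hdis
  have hmem : (x, y) ∈ discordantPairs ρ' τ := by
    rw [heq]
    simp only [discordantPairs, mem_filter, mem_univ, true_and]
    exact ⟨hxy, hdis⟩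
  simp only [discordantPairs, mem_filter] at hmem
  exact hmem.2.2 (h' x hx y hy)

theorem eq_of_sameOrderOn (hρ : ρ ∈ topkFinset hk a) (hρ' : ρ' ∈ topkFinset hk a)
    (h : SameOrderOn (Set.range a)ᶜ ρ ρ') : ρ = ρ' := by
  refine SameOrderOn.eq fun x _ y _ => ?_
  by_cases hxy : x ∈ Set.range a ∨ y ∈ Set.range a
  · exact inv_lt_inv_iff_of_mem_range hρ hρ' hxy
  · rw [not_or] at hxy
    exact h x hxy.1 y hxy.2

end TopK

section Exists

variable {n k : ℕ} {hk : k ≤ n} {a : Fin k → Fin n}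

theorem exists_mem_topkFinset_sameOrderOn (ha : Function.Injective a) (τ : Perm (Fin n)) :
    ∃ ρ ∈ topkFinset hk a, SameOrderOn (Set.range a)ᶜ ρ τ := by
  classical
  let tail : {p // τ p ∉ Set.range a} ≃ {x // x ∉ Set.range a} := τ.subtypeEquiv fun _ => Iff.rfl
  have hcard : Fintype.card {p // τ p ∉ Set.range a} = n - k := by
    rw [Fintype.card_congr tail, Fintype.card_subtype_compl, Fintype.card_fin,
      Set.card_range_of_injective ha, Fintype.card_fin]
  let e := Fintype.orderIsoFinOfCardEq _ hcard
  let pos : Fin k ⊕ Fin (n - k) ≃ Fin n :=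
    finSumFinEquiv.trans (finCongr (Nat.add_sub_of_le hk))
  let ρ : Perm (Fin n) := pos.symm.trans <|
    (Equiv.sumCongr (Equiv.ofInjective a ha) (e.toEquiv.trans tail)).trans
      (Equiv.sumCompl (· ∈ Set.range a))
  -- `ρ` puts `a` in the first `k` positions and the remaining items after them in `τ`-order.
  refine ⟨ρ, mem_topkFinset.2 fun i => ?_, fun x hx y hy => ?_⟩
  · have : pos.symm (Fin.castLE hk i) = Sum.inl i := by
      rw [Equiv.symm_apply_eq]; ext; simp [pos]
    simp [ρ, this]
  · have hinv : ∀ z (hz : z ∉ Set.range a),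
        ρ⁻¹ z = pos (Sum.inr (e.symm ⟨τ⁻¹ z, by simpa using hz⟩)) := by
      intro z hz
      rw [Perm.inv_eq_iff_eq]
      simp [ρ, tail]
    have hpos : ∀ j j', pos (Sum.inr j) < pos (Sum.inr j') ↔ j < j' := by
      intro j j'
      simp [pos]
    rw [hinv x hx, hinv y hy, hpos, e.symm.lt_iff_lt, Subtype.mk_lt_mk]

theorem sameOrderOn_of_forall_kendallDist_le (ha : Function.Injective a) {ρ τ : Perm (Fin n)}
    (hρ : ρ ∈ topkFinset hk a)
    (hmin : ∀ ρ' ∈ topkFinset hk a, kendallDist ρ τ ≤ kendallDist ρ' τ) :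
    SameOrderOn (Set.range a)ᶜ ρ τ := by
  obtain ⟨ρ', hρ', h'⟩ := exists_mem_topkFinset_sameOrderOn (hk := hk) ha τ
  exact sameOrderOn_of_kendallDist_le hρ hρ' h' (hmin ρ' hρ')

end Exists

section Antithetic

variable {n k : ℕ}

theorem revAfter_apply_of_lt {p : Fin n} (hp : (p : ℕ) < k) : revAfter n k p = p :=
  dif_pos hp

theorem val_revAfter_apply_of_le {p : Fin n} (hp : k ≤ (p : ℕ)) :
    (revAfter n k p : ℕ) = n + k - 1 - p :=
  congrArg Fin.val (dif_neg (not_lt.2 hp))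

theorem revAfter_lt_revAfter_iff {p q : Fin n} (hp : k ≤ (p : ℕ)) (hq : k ≤ (q : ℕ)) :
    revAfter n k p < revAfter n k q ↔ q < p := by
  rw [Fin.lt_def, Fin.lt_def, val_revAfter_apply_of_le hp, val_revAfter_apply_of_le hq]
  omega

theorem revAfter_inv : (revAfter n k)⁻¹ = revAfter n k :=
  Function.Involutive.toPerm_symm _

theorem antithetic_inv_apply (σ : Perm (Fin n)) (x : Fin n) :
    (antithetic n k σ)⁻¹ x = revAfter n k (σ⁻¹ x) := by
  rw [antithetic, mul_inv_rev, revAfter_inv, Perm.mul_apply]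

variable {hk : k ≤ n} {a : Fin k → Fin n} {σ : Perm (Fin n)}

theorem antithetic_mem_topkFinset (hσ : σ ∈ topkFinset hk a) :
    antithetic n k σ ∈ topkFinset hk a :=
  mem_topkFinset.2 fun i => by
    rw [antithetic, Perm.mul_apply, revAfter_apply_of_lt (by simp)]
    exact mem_topkFinset.1 hσ i

theorem antithetic_inv_lt_inv_iff (hσ : σ ∈ topkFinset hk a) {x y : Fin n}
    (hx : x ∉ Set.range a) (hy : y ∉ Set.range a) :
    (antithetic n k σ)⁻¹ x < (antithetic n k σ)⁻¹ y ↔ σ⁻¹ y < σ⁻¹ x := by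
  rw [antithetic_inv_apply, antithetic_inv_apply, revAfter_lt_revAfter_iff
    ((le_inv_apply_iff_notMem_range hσ).2 hx) ((le_inv_apply_iff_notMem_range hσ).2 hy)]

end Antithetic

/-- For nested top-`l` and top-`m` partial rankings
`R = R(a_1,…,a_l) ⊇ R'' = R(a_1,…,a_m)` and every `σ ∈ R`, the antithetic
operator on `R''` commutes with the Kendall projection onto `R''`:
`A_{R''}(Π_{R''}(σ)) = Π_{R''}(A_R(σ))`. Here `pr` is any fixed choice
function selecting the Kendall-closest element of `R''`. -/
theorem antithetic_proj_comm {n l m : ℕ} (hlm : l ≤ m) (hm : m ≤ n)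
    (a : Fin m → Fin n) (ha : Function.Injective a)
    (pr : Equiv.Perm (Fin n) → Equiv.Perm (Fin n))
    (hpr : ∀ τ, pr τ ∈ topkFinset hm a ∧
      ∀ ρ ∈ topkFinset hm a, kendallDist (pr τ) τ ≤ kendallDist ρ τ)
    (σ : Equiv.Perm (Fin n))
    (hσ : σ ∈ topkFinset (hlm.trans hm) (a ∘ Fin.castLE hlm)) :
    antithetic n m (pr σ) = pr (antithetic n l σ) := by
  have hproj : ∀ τ, SameOrderOn (Set.range a)ᶜ (pr τ) τ := fun τ =>
    sameOrderOn_of_forall_kendallDist_le ha (hpr τ).1 (hpr τ).2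
  have htail : ∀ {x}, x ∉ Set.range a → x ∉ Set.range (a ∘ Fin.castLE hlm) :=
    fun hx hx' => hx (Set.range_comp_subset_range _ _ hx')
  refine eq_of_sameOrderOn (antithetic_mem_topkFinset (hpr σ).1) (hpr _).1 fun x hx y hy => ?_
  calc (antithetic n m (pr σ))⁻¹ x < (antithetic n m (pr σ))⁻¹ y
      ↔ (pr σ)⁻¹ y < (pr σ)⁻¹ x := antithetic_inv_lt_inv_iff (hpr σ).1 hx hy
    _ ↔ σ⁻¹ y < σ⁻¹ x := hproj σ y hy x hx
    _ ↔ (antithetic n l σ)⁻¹ x < (antithetic n l σ)⁻¹ y :=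
      (antithetic_inv_lt_inv_iff hσ (htail hx) (htail hy)).symm
    _ ↔ (pr (antithetic n l σ))⁻¹ x < (pr (antithetic n l σ))⁻¹ y := (hproj _ x hx y hy).symm
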